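/- arXiv:2406.07187 — 3 statements merged into one kernel-verified Lean document; each statement's English description precedes it below -/
import Mathlib

section
/- Let $d : \mathbb{N} \times \mathbb{N} \to \mathbb{R}$ be a symmetric distance function with $d_{i,j} \ge 1$ for all $i \ne j$, and let $k \ge 2$. Suppose $\lambda_1 > 0$ satisfies $(1/d_{i,j})^{\lambda_1} > \binom{k}{2} (1/d_{i',j'})^{\lambda_1}$ for every pair of distances with $d_{i,j} < d_{i',j'}$. Then for any two $k$-element subsets $S, S'$ of indices with $\min_{i<j, i,j \in S} d_{i,j} > \min_{i<j, i,j \in S'} d_{i,j}$, the objective value $\sum_{i<j, i,j\in S} (1/d_{i,j})^{\lambda_1}$ is strictly less than $\sum_{i<j, i,j\in S'} (1/d_{i,j})^{\lambda_1}$. Consequently, any minimizer of $E(S) = \sum_{i<j, i,j\in S} (1/d_{i,j})^{\lambda_1}$ over $k$-subsets maximizes the minimum pairwise distance. -/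
open Finset

/-- Pairs `(i, j)` with `i < j`, both in `S`. -/
def pairsOf (S : Finset ℕ) : Finset (ℕ × ℕ) :=
  (S ×ˢ S).filter (fun p => p.1 < p.2)

/-- The objective function `E₂(S) = ∑_{i<j, i,j ∈ S} (1/d i j)^λ₁`. -/
noncomputable def objFun (d : ℕ → ℕ → ℝ) (lam1 : ℝ) (S : Finset ℕ) : ℝ :=
  ∑ p ∈ pairsOf S, (1 / d p.1 p.2) ^ lam1

/-- The minimum pairwise distance over a subset `S`. -/
noncomputable def dmin (d : ℕ → ℕ → ℝ) (S : Finset ℕ) : ℝ :=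
  sInf {x : ℝ | ∃ i ∈ S, ∃ j ∈ S, i < j ∧ d i j = x}

/-!
Let `p` be a closest pair of `S` and `p'` a closest pair of `S'`. Every one of the `k.choose 2`
terms of `E(S)` is at most `(1 / d p)^λ`, while `E(S')` contains the term `(1 / d p')^λ`. Since
`d p' < d p`, the hypothesis on `λ` makes that single term larger than `k.choose 2` copies of
`(1 / d p)^λ`, so `E(S) < E(S')`. The second claim is the contrapositive of the first.
-/

@[simp]
lemma mem_pairsOf {S : Finset ℕ} {p : ℕ × ℕ} :
    p ∈ pairsOf S ↔ p.1 ∈ S ∧ p.2 ∈ S ∧ p.1 < p.2 := by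
  simp [pairsOf, and_assoc]

lemma card_pairsOf (S : Finset ℕ) : (pairsOf S).card = S.card.choose 2 :=
  card_product_filter_lt

lemma pairsOf_nonempty {S : Finset ℕ} (h : 2 ≤ S.card) : (pairsOf S).Nonempty :=
  card_pos.mp (by rw [card_pairsOf]; exact Nat.choose_pos h)

section dmin

variable (d : ℕ → ℕ → ℝ) {S : Finset ℕ}

lemma dmin_set_eq_image :
    {x : ℝ | ∃ i ∈ S, ∃ j ∈ S, i < j ∧ d i j = x} =
      (fun p : ℕ × ℕ => d p.1 p.2) '' (pairsOf S : Set (ℕ × ℕ)) := by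
  ext x
  simp [and_assoc]

lemma dmin_le {p : ℕ × ℕ} (hp : p ∈ pairsOf S) : dmin d S ≤ d p.1 p.2 := by
  rw [dmin, dmin_set_eq_image]
  exact csInf_le (((pairsOf S).finite_toSet.image _).bddBelow) ⟨p, hp, rfl⟩

lemma exists_pairsOf_eq_dmin (h : 2 ≤ S.card) : ∃ p ∈ pairsOf S, d p.1 p.2 = dmin d S := by
  rw [dmin, dmin_set_eq_image]
  exact ((pairsOf_nonempty h).to_set.image _).csInf_mem ((pairsOf S).finite_toSet.image _)

end dmin

section objFun

variable {d : ℕ → ℕ → ℝ} {lam : ℝ} {S : Finset ℕ}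

lemma objFun_le_choose_mul (hpos : ∀ i j, i ≠ j → 0 < d i j) (hlam : 0 ≤ lam)
    (h : 2 ≤ S.card) : objFun d lam S ≤ S.card.choose 2 * (1 / dmin d S) ^ lam := by
  obtain ⟨p, hp, hpd⟩ := exists_pairsOf_eq_dmin d h
  have hdmin : 0 < dmin d S := hpd ▸ hpos _ _ (mem_pairsOf.mp hp).2.2.ne
  calc objFun d lam S ≤ ∑ _q ∈ pairsOf S, (1 / dmin d S) ^ lam := by
        refine sum_le_sum fun q hq => ?_
        have := hpos _ _ (mem_pairsOf.mp hq).2.2.ne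
        gcongr
        exact dmin_le d hq
    _ = S.card.choose 2 * (1 / dmin d S) ^ lam := by
        rw [sum_const, card_pairsOf, nsmul_eq_mul]

lemma rpow_dmin_le_objFun (hpos : ∀ i j, i ≠ j → 0 < d i j) (h : 2 ≤ S.card) :
    (1 / dmin d S) ^ lam ≤ objFun d lam S := by
  obtain ⟨p, hp, hpd⟩ := exists_pairsOf_eq_dmin d h
  rw [← hpd]
  refine single_le_sum (f := fun q => (1 / d q.1 q.2) ^ lam) (fun q hq => ?_) hp
  have := hpos _ _ (mem_pairsOf.mp hq).2.2.ne
  positivity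

end objFun

lemma objFun_lt_of_dmin_lt {d : ℕ → ℕ → ℝ} {k : ℕ} {lam : ℝ}
    (hpos : ∀ i j, i ≠ j → 0 < d i j) (hk : 2 ≤ k) (hlam : 0 ≤ lam)
    (hcond : ∀ i j i' j', i ≠ j → i' ≠ j' → d i j < d i' j' →
      (1 / d i j) ^ lam > (k.choose 2 : ℝ) * (1 / d i' j') ^ lam)
    {S S' : Finset ℕ} (hS : S.card = k) (hS' : S'.card = k) (hlt : dmin d S' < dmin d S) :
    objFun d lam S < objFun d lam S' := by
  obtain ⟨p, hp, hpd⟩ := exists_pairsOf_eq_dmin d (hS ▸ hk)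
  obtain ⟨p', hp', hpd'⟩ := exists_pairsOf_eq_dmin d (hS' ▸ hk)
  have hdom := hcond p'.1 p'.2 p.1 p.2 (mem_pairsOf.mp hp').2.2.ne (mem_pairsOf.mp hp).2.2.ne
    (by rwa [hpd, hpd'])
  rw [hpd, hpd'] at hdom
  calc objFun d lam S ≤ k.choose 2 * (1 / dmin d S) ^ lam :=
        hS ▸ objFun_le_choose_mul hpos hlam (hS ▸ hk)
    _ < (1 / dmin d S') ^ lam := hdom
    _ ≤ objFun d lam S' := rpow_dmin_le_objFun hpos (hS' ▸ hk)

theorem stmt_0_general (d : ℕ → ℕ → ℝ) (k : ℕ) (lam1 : ℝ) (P : Finset ℕ)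
    (hd1 : ∀ i j, i ≠ j → 1 ≤ d i j)
    (hk : 2 ≤ k) (hlam1 : 0 < lam1)
    (hcond : ∀ i j i' j', i ≠ j → i' ≠ j' → d i j < d i' j' →
      (1 / d i j) ^ lam1 > (k.choose 2 : ℝ) * (1 / d i' j') ^ lam1) :
    (∀ S S' : Finset ℕ, S ⊆ P → S' ⊆ P → S.card = k → S'.card = k →
      dmin d S' < dmin d S → objFun d lam1 S < objFun d lam1 S') ∧
    (∀ S : Finset ℕ, S ⊆ P → S.card = k →
      (∀ T : Finset ℕ, T ⊆ P → T.card = k → objFun d lam1 S ≤ objFun d lam1 T) →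
      (∀ T : Finset ℕ, T ⊆ P → T.card = k → dmin d T ≤ dmin d S)) := by
  have hpos : ∀ i j, i ≠ j → 0 < d i j := fun i j h => one_pos.trans_le (hd1 i j h)
  have key : ∀ S S' : Finset ℕ, S.card = k → S'.card = k → dmin d S' < dmin d S →
      objFun d lam1 S < objFun d lam1 S' :=
    fun _ _ => objFun_lt_of_dmin_lt hpos hk hlam1.le hcond
  refine ⟨fun S S' _ _ => key S S', fun S _ hS hmin T hTP hT => ?_⟩
  exact not_lt.mp fun hlt => (key T S hT hS hlt).not_ge (hmin T hTP hT)

theorem stmt_0 (d : ℕ → ℕ → ℝ) (k : ℕ) (lam1 : ℝ) (P : Finset ℕ)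
    (hsymm : ∀ i j, d i j = d j i)
    (hd1 : ∀ i j, i ≠ j → 1 ≤ d i j)
    (hk : 2 ≤ k) (hlam1 : 0 < lam1)
    (hcond : ∀ i j i' j', i ≠ j → i' ≠ j' → d i j < d i' j' →
      (1 / d i j) ^ lam1 > (k.choose 2 : ℝ) * (1 / d i' j') ^ lam1) :
    (∀ S S' : Finset ℕ, S ⊆ P → S' ⊆ P → S.card = k → S'.card = k →
      dmin d S' < dmin d S → objFun d lam1 S < objFun d lam1 S') ∧
    (∀ S : Finset ℕ, S ⊆ P → S.card = k →
      (∀ T : Finset ℕ, T ⊆ P → T.card = k → objFun d lam1 S ≤ objFun d lam1 T) →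
      (∀ T : Finset ℕ, T ⊆ P → T.card = k → dmin d T ≤ dmin d S)) :=
  stmt_0_general d k lam1 P hd1 hk hlam1 hcond
end

section
/- For a natural number $r \ge 1$ and fixed $k \ge 1$, the function $f(\delta) = (1 + r\delta)^{-\lambda_1(\delta)}$, where $\lambda_1(\delta) = (\log(k(k+1)/2))/(\log(1+r\delta) - \log(1+(r-1)\delta))$, is monotonically decreasing in $\delta$ on $(0, \infty)$. -/
/-!
Put `s = log (1 + r δ)`, so that `log (1 + (r - 1) δ) = g s` with `g s = log (1/r + (1 - 1/r) eˢ)`.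
The function `g` is convex (its derivative is increasing) and vanishes at `0`, so its secant slope
`g s / s` increases with `s`, hence with `δ`. Since `f(δ) = exp (-L / (1 - g s / s))` with
`L = log (k (k + 1) / 2) ≥ 0`, `f` decreases.
-/

open Real Set

theorem convexOn_log_add_mul_exp {a b : ℝ} (ha : 0 ≤ a) (hb : 0 ≤ b) (hab : 0 < a + b) :
    ConvexOn ℝ univ (fun s => log (a + b * exp s)) := by
  have hpos : ∀ s, 0 < a + b * exp s := by
    intro s
    rcases hb.eq_or_lt with rfl | hb
    · simpa using hab
    · exact add_pos_of_nonneg_of_pos ha (mul_pos hb (exp_pos s))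
  have hderiv : ∀ s, HasDerivAt (fun s => log (a + b * exp s)) (b * exp s / (a + b * exp s)) s :=
    fun s => (((hasDerivAt_exp s).const_mul b).const_add a).log (hpos s).ne'
  refine MonotoneOn.convexOn_of_deriv convex_univ
    (fun s _ => (hderiv s).continuousAt.continuousWithinAt)
    (fun s _ => (hderiv s).differentiableAt.differentiableWithinAt) ?_
  intro s _ t _ hst
  rw [(hderiv s).deriv, (hderiv t).deriv, div_le_div_iff₀ (hpos s) (hpos t)]
  nlinarith [mul_le_mul_of_nonneg_left (exp_le_exp.2 hst) (mul_nonneg ha hb)]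

theorem monotoneOn_log_one_add_mul_div_log_one_add_mul {c d : ℝ} (hc : 0 ≤ c) (hcd : c ≤ d)
    (hd : 0 < d) :
    MonotoneOn (fun δ => log (1 + c * δ) / log (1 + d * δ)) (Ioi 0) := by
  set g : ℝ → ℝ := fun s => log ((1 - c / d) + c / d * exp s) with hg_def
  have hg : ConvexOn ℝ univ g :=
    convexOn_log_add_mul_exp (sub_nonneg.2 ((div_le_one hd).2 hcd)) (div_nonneg hc hd.le)
      (by norm_num)
  have hg0 : g 0 = 0 := by simp [hg_def]
  have hsubst : ∀ δ : ℝ, 0 < δ → 0 < log (1 + d * δ) ∧ g (log (1 + d * δ)) = log (1 + c * δ) := by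
    intro δ hδ
    refine ⟨log_pos (by nlinarith), ?_⟩
    rw [hg_def]
    dsimp only
    rw [exp_log (by nlinarith)]
    congr 1
    field_simp
    ring
  intro x hx y hy hxy
  obtain ⟨hsx, hgx⟩ := hsubst x hx
  obtain ⟨hsy, hgy⟩ := hsubst y hy
  have hslope := hg.secant_mono (mem_univ 0) (mem_univ _) (mem_univ _) hsx.ne' hsy.ne'
    (log_le_log (by nlinarith [mem_Ioi.1 hx]) (by nlinarith))
  simpa only [hg0, sub_zero, hgx, hgy] using hslope

theorem rpow_neg_div_log_sub {x : ℝ} (hx : 0 < x) (hx1 : x ≠ 1) (b L : ℝ) :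
    x ^ (-(L / (log x - b))) = exp (-(L / (1 - b / log x))) := by
  rw [rpow_def_of_pos hx, one_sub_div (log_ne_zero_of_pos_of_ne_one hx hx1), div_div_eq_mul_div]
  ring_nf

theorem antitoneOn_one_add_mul_rpow_neg_div_log_sub {c d L : ℝ} (hc : 0 ≤ c) (hcd : c < d)
    (hL : 0 ≤ L) :
    AntitoneOn (fun δ => (1 + d * δ) ^ (-(L / (log (1 + d * δ) - log (1 + c * δ))))) (Ioi 0) := by
  have hd : 0 < d := hc.trans_lt hcd
  intro x hx y hy hxy
  have hx1 : 1 < 1 + d * x := by nlinarith [mem_Ioi.1 hx]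
  have hy1 : 1 < 1 + d * y := by nlinarith [mem_Ioi.1 hy]
  have hratio_lt_one : log (1 + c * y) / log (1 + d * y) < 1 :=
    (div_lt_one (log_pos hy1)).2 (log_lt_log (by nlinarith [mem_Ioi.1 hy]) (by nlinarith))
  dsimp only
  rw [rpow_neg_div_log_sub (by linarith) hx1.ne', rpow_neg_div_log_sub (by linarith) hy1.ne']
  have hratio := monotoneOn_log_one_add_mul_div_log_one_add_mul hc hcd.le hd hx hy hxy
  exact exp_le_exp.2 <| neg_le_neg <|
    div_le_div_of_nonneg_left hL (by linarith) (sub_le_sub_left hratio 1)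

theorem stmt_5 (r k : ℕ) (hr : 1 ≤ r) (hk : 1 ≤ k) :
    AntitoneOn
      (fun δ : ℝ =>
        (1 + r * δ) ^
          (-((Real.log (k * (k + 1) / 2)) /
            (Real.log (1 + r * δ) - Real.log (1 + ((r : ℝ) - 1) * δ)))))
      (Set.Ioi (0 : ℝ)) := by
  have hr' : (1 : ℝ) ≤ r := by exact_mod_cast hr
  have hk' : (1 : ℝ) ≤ k := by exact_mod_cast hk
  exact antitoneOn_one_add_mul_rpow_neg_div_log_sub (by linarith) (by linarith)
    (log_nonneg (by nlinarith))
end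

section
/- Applying weight distribution followed by Dicke unitaries on each register produces the full Dicke state: for $0 \le l \le n$ and $0 \le m \le n$, $\binom{n}{l}^{-1/2} \sum_{i=0}^{l} \sqrt{\binom{m}{i}\binom{n-m}{l-i}}\, |D_{l-i}^{n-m}\rangle \otimes |D_i^m\rangle = |D_l^n\rangle$, where $|D_w^q\rangle$ is the uniform superposition of $q$-bit strings of Hamming weight $w$. -/
open Finset

/-- Hamming weight of a bit string. -/
def hammingWt {n : ℕ} (x : Fin n → Bool) : ℕ :=
  (Finset.univ.filter (fun i => x i = true)).card

/-- The Dicke state `|D_w^q⟩`, as a vector indexed by the `2^q` basis states: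
the uniform superposition of all `q`-bit strings of Hamming weight `w`. -/
noncomputable def dickeState (q w : ℕ) : (Fin q → Bool) → ℂ :=
  fun x => if hammingWt x = w then (1 / Real.sqrt (q.choose w) : ℝ) else 0

/-! Only the term `i = hammingWt y` of the sum can be nonzero, and it is nonzero exactly when
`hammingWt x + hammingWt y = l`; the amplitudes then multiply out as
`√(C(b,|y|) C(a,|x|) / C(a+b,l)) · C(a,|x|)^(-1/2) · C(b,|y|)^(-1/2) = C(a+b,l)^(-1/2)`. -/

lemma hammingWt_le {n : ℕ} (x : Fin n → Bool) : hammingWt x ≤ n :=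
  (card_filter_le _ _).trans_eq (card_fin n)

lemma hammingWt_append {a b : ℕ} (x : Fin a → Bool) (y : Fin b → Bool) :
    hammingWt (Fin.append x y) = hammingWt x + hammingWt y := by
  simp only [hammingWt, card_filter, Fin.sum_univ_add, Fin.append_left, Fin.append_right]

lemma dickeState_of_hammingWt_ne {q w : ℕ} {x : Fin q → Bool} (h : hammingWt x ≠ w) :
    dickeState q w x = 0 :=
  if_neg h

lemma dickeState_hammingWt {q : ℕ} (x : Fin q → Bool) :
    dickeState q (hammingWt x) x = ((Real.sqrt (q.choose (hammingWt x)))⁻¹ : ℝ) := by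
  simp [dickeState]

lemma sqrt_mul_div_mul_inv_sqrt_mul_inv_sqrt {p q : ℝ} (hp : 0 < p) (hq : 0 < q) (r : ℝ) :
    Real.sqrt (p * q / r) * (Real.sqrt q)⁻¹ * (Real.sqrt p)⁻¹ = (Real.sqrt r)⁻¹ := by
  have hp' : Real.sqrt p ≠ 0 := (Real.sqrt_pos.mpr hp).ne'
  have hq' : Real.sqrt q ≠ 0 := (Real.sqrt_pos.mpr hq).ne'
  rw [Real.sqrt_div (mul_pos hp hq).le, Real.sqrt_mul hp.le]
  field_simp

theorem stmt_12_general (a b l : ℕ)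
    (x : Fin a → Bool) (y : Fin b → Bool) :
    ∑ i ∈ Finset.range (l + 1),
        (Real.sqrt ((b.choose i * a.choose (l - i) : ℕ) / ((a + b).choose l : ℝ)) : ℂ) *
          dickeState a (l - i) x * dickeState b i y
      = dickeState (a + b) l (Fin.append x y) := by
  have hy_ne {i : ℕ} (hi : hammingWt y ≠ i) : dickeState b i y = 0 := dickeState_of_hammingWt_ne hi
  by_cases h : hammingWt x + hammingWt y = l
  · subst h
    rw [sum_eq_single_of_mem (hammingWt y) (by simp) fun i _ hi ↦ by rw [hy_ne hi.symm, mul_zero],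
      Nat.add_sub_cancel, dickeState_hammingWt, dickeState_hammingWt, ← hammingWt_append,
      dickeState_hammingWt, hammingWt_append]
    have hx := Nat.choose_pos (hammingWt_le x)
    have hy := Nat.choose_pos (hammingWt_le y)
    push_cast
    exact_mod_cast congrArg Complex.ofReal
      (sqrt_mul_div_mul_inv_sqrt_mul_inv_sqrt (Nat.cast_pos.mpr hy) (Nat.cast_pos.mpr hx) _)
  · rw [dickeState_of_hammingWt_ne (by rwa [hammingWt_append])]
    refine sum_eq_zero fun i hi ↦ ?_
    obtain rfl | hi' := eq_or_ne (hammingWt y) i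
    · rw [dickeState_of_hammingWt_ne (by rw [mem_range] at hi; omega), mul_zero, zero_mul]
    · rw [hy_ne hi', mul_zero]

/-- With registers of `n - m` and `m` qubits (here `a = n - m`, `b = m`), applying the
weight distribution followed by Dicke unitaries on each register yields the full Dicke
state: componentwise, at the basis state obtained by concatenating `x` and `y`. -/
theorem stmt_12 (a b l : ℕ) (hl : l ≤ a + b)
    (x : Fin a → Bool) (y : Fin b → Bool) :
    ∑ i ∈ Finset.range (l + 1),
        (Real.sqrt ((b.choose i * a.choose (l - i) : ℕ) / ((a + b).choose l : ℝ)) : ℂ) *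
          dickeState a (l - i) x * dickeState b i y
      = dickeState (a + b) l (Fin.append x y) :=
  stmt_12_general a b l x y
end
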